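/- Second derivative of the Cauchy integral operator at the identity (evaluation D²𝒞(w)[conj(w)^{m−1}, conj(w)^{m−1}](w^{m−1}) = (m−1)(m−2)/w^{m+1}). Let w ∈ ℂ with |w| = 1 and let m ∈ ℕ with m ≥ 2. Then (2/(2πi)) ∮_{|τ|=1} ((τ^{m−1} − w^{m−1})(conj(τ)^{m−1} − conj(w)^{m−1})²/(τ − w)³) dτ + ((2(m−1))/(2πi)) ∮_{|τ|=1} ((τ^{m−1} − w^{m−1})(conj(τ)^{m−1} − conj(w)^{m−1})/((τ − w)²·τ^m)) dτ = (m−1)(m−2)/w^{m+1}. -/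

import Mathlib

open ComplexConjugate Finset Metric Real

noncomputable section

/-- The constant `2πi`. -/
def twoPiI : ℂ := ((2 * Real.pi : ℝ) : ℂ) * Complex.I

lemma twoPiI_ne : twoPiI ≠ 0 := by
  simp [twoPiI, Real.pi_ne_zero, Complex.I_ne_zero, Complex.ofReal_ne_zero]

lemma circleIntegrable_cz (a : ℂ) (k : ℤ) : CircleIntegrable (fun z => a * z ^ k) 0 1 := by
  have h : CircleIntegrable (fun z : ℂ => (z - 0) ^ k) 0 1 := by
    rw [circleIntegrable_sub_zpow_iff]
    right; right; simp
  simp only [sub_zero] at h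
  exact (h.const_mul a : IntervalIntegrable _ _ _ _)

lemma CircleIntegrable.finsum' {ι : Type*} (s : Finset ι) (f : ι → ℂ → ℂ)
    (h : ∀ i ∈ s, CircleIntegrable (f i) 0 1) :
    CircleIntegrable (fun z => ∑ i ∈ s, f i z) 0 1 := by
  classical
  induction s using Finset.induction with
  | empty => simpa using circleIntegrable_const (0 : ℂ) 0 1
  | insert x s hx ih =>
    simp only [Finset.sum_insert hx]
    exact ((h x (Finset.mem_insert_self x s)).add
      (ih fun i hi => h i (Finset.mem_insert_of_mem hi)) : CircleIntegrable _ _ _)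

lemma integral_cz (a : ℂ) (k : ℤ) :
    (∮ z in C(0, 1), a * z ^ k) = if k = -1 then a * twoPiI else 0 := by
  rw [circleIntegral.integral_const_mul]
  split_ifs with hk
  · subst hk
    have h : (∮ z in C(0, 1), (z - 0)⁻¹) = 2 * Real.pi * Complex.I :=
      circleIntegral.integral_sub_inv_of_mem_ball (by simp)
    simp only [sub_zero] at h
    simp only [zpow_neg_one, h, twoPiI]
    push_cast; ring
  · have h : (∮ z in C(0, 1), (z - 0) ^ k) = 0 :=
      circleIntegral.integral_sub_zpow_of_ne hk 0 0 1
    simp only [sub_zero] at h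
    rw [h, mul_zero]

lemma circleIntegral_finsum {ι : Type*} (s : Finset ι) (f : ι → ℂ → ℂ)
    (h : ∀ i ∈ s, CircleIntegrable (f i) 0 1) :
    (∮ z in C(0, 1), ∑ i ∈ s, f i z) = ∑ i ∈ s, ∮ z in C(0, 1), f i z := by
  simp only [circleIntegral, smul_sum]
  exact intervalIntegral.integral_finset_sum fun i hi => (h i hi).out

lemma circleIntegral_congr_off {w : ℂ} {f g : ℂ → ℂ}
    (h : ∀ τ, ‖τ‖ = 1 → τ ≠ w → f τ = g τ) :
    (∮ z in C(0, 1), f z) = ∮ z in C(0, 1), g z := by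
  have hc : (circleMap 0 1 ⁻¹' {w}).Countable :=
    (Set.countable_singleton _).preimage_circleMap 0 one_ne_zero
  refine intervalIntegral.integral_congr_ae ((hc.ae_notMem _).mono fun θ hθ _ => ?_)
  change circleMap 0 1 θ ≠ w at hθ
  have hm : ‖circleMap 0 1 θ‖ = 1 := by
    simpa using mem_sphere_zero_iff_norm.mp (circleMap_mem_sphere 0 zero_le_one θ)
  show _ • f _ = _ • g _
  rw [h _ hm hθ]

lemma alg1 (A B D Q : ℂ) (hA : A ≠ 0) (hB : B ≠ 0) (hD : D ≠ 0)
    (h : Q * D = A - B) :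
    (A - B) * (A⁻¹ - B⁻¹) ^ 2 / D ^ 3 = Q ^ 3 / (A ^ 2 * B ^ 2) := by
  have hQ : Q = (A - B) / D := by rw [eq_div_iff hD, h]
  rw [hQ]; field_simp; ring

lemma alg2 (A B D Q t : ℂ) (hA : A ≠ 0) (hB : B ≠ 0) (hD : D ≠ 0) (ht : t ≠ 0)
    (h : Q * D = A - B) :
    (A - B) * (A⁻¹ - B⁻¹) / (D ^ 2 * (A * t)) = -(Q ^ 2) / (A ^ 2 * B * t) := by
  have h1 : A⁻¹ - B⁻¹ = -(A - B) / (A * B) := by field_simp; ring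
  rw [h1, ← h]
  field_simp

lemma sum_pow_three {ι : Type*} (s : Finset ι) (f : ι → ℂ) :
    (∑ i ∈ s, f i) ^ 3 = ∑ i ∈ s, ∑ j ∈ s, ∑ k ∈ s, f i * f j * f k := by
  rw [pow_succ, sq, Finset.sum_mul_sum, Finset.sum_mul]
  refine Finset.sum_congr rfl fun i _ => ?_
  rw [Finset.sum_mul_sum]

lemma conj_eq_inv {τ : ℂ} (hτ : ‖τ‖ = 1) : conj τ = τ⁻¹ := by
  have hns : Complex.normSq τ = 1 := by
    rw [Complex.normSq_eq_norm_sq, hτ]; norm_num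
  rw [Complex.inv_def, hns]
  simp

/-- **Second derivative of the Cauchy integral operator at the identity**:
the evaluation `D²𝒞(w)[conj(w)^{m−1}, conj(w)^{m−1}](w^{m−1}) = (m−1)(m−2)/w^{m+1}`. -/
theorem cauchy_operator_second_derivative_evaluation (w : ℂ) (hw : ‖w‖ = 1)
    (m : ℕ) (hm : 2 ≤ m) :
    (2 / twoPiI) *
        (∮ τ in C(0, 1),
          (τ ^ (m - 1) - w ^ (m - 1)) * (conj τ ^ (m - 1) - conj w ^ (m - 1)) ^ 2 /
            (τ - w) ^ 3) +
      ((2 * ((m : ℂ) - 1)) / twoPiI) *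
        (∮ τ in C(0, 1),
          (τ ^ (m - 1) - w ^ (m - 1)) * (conj τ ^ (m - 1) - conj w ^ (m - 1)) /
            ((τ - w) ^ 2 * τ ^ m)) =
      ((m : ℂ) - 1) * ((m : ℂ) - 2) / w ^ (m + 1) := by
  obtain ⟨n, rfl⟩ : ∃ n, m = n + 1 := ⟨m - 1, by omega⟩
  have hn : 1 ≤ n := by omega
  have hw0 : w ≠ 0 := by intro h; simp [h] at hw
  have hcw : conj w = w⁻¹ := conj_eq_inv hw
  simp only [Nat.add_sub_cancel]
  -- pointwise facts used in both integrals
  have hfacts : ∀ τ : ℂ, ‖τ‖ = 1 → τ ≠ w →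
      τ ≠ 0 ∧ conj τ = τ⁻¹ ∧ τ - w ≠ 0 ∧
      (∑ j ∈ range n, τ ^ j * w ^ (n - 1 - j)) * (τ - w) = τ ^ n - w ^ n := by
    intro τ hτ hne
    refine ⟨fun h => by simp [h] at hτ, conj_eq_inv hτ, sub_ne_zero.mpr hne,
      geom_sum₂_mul τ w n⟩
  -- ### First integral
  have hI1 : (∮ τ in C(0, 1),
        (τ ^ n - w ^ n) * (conj τ ^ n - conj w ^ n) ^ 2 / (τ - w) ^ 3)
      = ∑ j ∈ range n, ∑ k ∈ range n, ∑ l ∈ range n,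
          (if ((j : ℤ) + k + l - 2 * n = -1) then
            (w ^ (n - 1 - j) * w ^ (n - 1 - k) * w ^ (n - 1 - l) / w ^ (2 * n)) * twoPiI
          else 0) := by
    rw [circleIntegral_congr_off (w := w)
      (g := fun τ => ∑ j ∈ range n, ∑ k ∈ range n, ∑ l ∈ range n,
        (w ^ (n - 1 - j) * w ^ (n - 1 - k) * w ^ (n - 1 - l) / w ^ (2 * n)) *
          τ ^ ((j : ℤ) + k + l - 2 * n)) ?_]
    · rw [circleIntegral_finsum _ _ (fun j _ => CircleIntegrable.finsum' _ _
        (fun k _ => CircleIntegrable.finsum' _ _ (fun l _ => circleIntegrable_cz _ _)))]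
      refine Finset.sum_congr rfl fun j _ => ?_
      rw [circleIntegral_finsum _ _
        (fun k _ => CircleIntegrable.finsum' _ _ (fun l _ => circleIntegrable_cz _ _))]
      refine Finset.sum_congr rfl fun k _ => ?_
      rw [circleIntegral_finsum _ _ (fun l _ => circleIntegrable_cz _ _)]
      exact Finset.sum_congr rfl fun l _ => integral_cz _ _
    · intro τ hτ hne
      obtain ⟨hτ0, hcτ, hsub, hgeom⟩ := hfacts τ hτ hne
      have step1 : (τ ^ n - w ^ n) * (conj τ ^ n - conj w ^ n) ^ 2 / (τ - w) ^ 3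
          = (∑ j ∈ range n, τ ^ j * w ^ (n - 1 - j)) ^ 3 / ((τ ^ n) ^ 2 * (w ^ n) ^ 2) := by
        rw [hcτ, hcw, inv_pow, inv_pow]
        exact alg1 _ _ _ _ (pow_ne_zero _ hτ0) (pow_ne_zero _ hw0) hsub hgeom
      rw [step1, sum_pow_three]
      simp only [Finset.sum_div]
      refine Finset.sum_congr rfl fun j hj => Finset.sum_congr rfl fun k hk =>
        Finset.sum_congr rfl fun l hl => ?_
      have hz : (τ : ℂ) ^ ((j : ℤ) + k + l - 2 * n)
          = τ ^ j * τ ^ k * τ ^ l / (τ ^ n) ^ 2 := by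
        rw [show ((j : ℤ) + k + l - 2 * n) = ((j : ℤ) + (k : ℤ) + (l : ℤ)) - ((2 * n : ℕ) : ℤ) by
          push_cast; ring]
        rw [zpow_sub₀ hτ0]
        simp only [zpow_add₀ hτ0, zpow_natCast]
        rw [show (2 * n) = n * 2 from Nat.mul_comm 2 n, pow_mul]
      rw [hz, show w ^ (2 * n) = (w ^ n) ^ 2 by rw [Nat.mul_comm 2 n, pow_mul]]
      field_simp
  -- ### Second integral vanishes
  have hI2 : (∮ τ in C(0, 1),
        (τ ^ n - w ^ n) * (conj τ ^ n - conj w ^ n) / ((τ - w) ^ 2 * τ ^ (n + 1))) = 0 := by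
    rw [circleIntegral_congr_off (w := w)
      (g := fun τ => ∑ j ∈ range n, ∑ k ∈ range n,
        (-(w ^ (n - 1 - j) * w ^ (n - 1 - k)) / w ^ n) * τ ^ ((j : ℤ) + k - (2 * n + 1))) ?_]
    · rw [circleIntegral_finsum _ _
        (fun j _ => CircleIntegrable.finsum' _ _ (fun k _ => circleIntegrable_cz _ _))]
      refine Finset.sum_eq_zero fun j hj => ?_
      rw [circleIntegral_finsum _ _ (fun k _ => circleIntegrable_cz _ _)]
      refine Finset.sum_eq_zero fun k hk => ?_
      rw [integral_cz, if_neg]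
      simp only [mem_range] at hj hk
      omega
    · intro τ hτ hne
      obtain ⟨hτ0, hcτ, hsub, hgeom⟩ := hfacts τ hτ hne
      have step1 : (τ ^ n - w ^ n) * (conj τ ^ n - conj w ^ n) / ((τ - w) ^ 2 * τ ^ (n + 1))
          = -((∑ j ∈ range n, τ ^ j * w ^ (n - 1 - j)) ^ 2) / ((τ ^ n) ^ 2 * w ^ n * τ) := by
        rw [hcτ, hcw, inv_pow, inv_pow, pow_succ]
        exact alg2 _ _ _ _ _ (pow_ne_zero _ hτ0) (pow_ne_zero _ hw0) hsub hτ0 hgeom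
      rw [step1, sq, Finset.sum_mul_sum]
      rw [← Finset.sum_neg_distrib]
      simp only [Finset.sum_div]
      refine Finset.sum_congr rfl fun j hj => ?_
      rw [← Finset.sum_neg_distrib]
      simp only [Finset.sum_div]
      refine Finset.sum_congr rfl fun k hk => ?_
      have hz : (τ : ℂ) ^ ((j : ℤ) + k - (2 * n + 1))
          = τ ^ j * τ ^ k / ((τ ^ n) ^ 2 * τ) := by
        rw [show ((j : ℤ) + k - (2 * n + 1)) = ((j : ℤ) + (k : ℤ)) - ((2 * n + 1 : ℕ) : ℤ) by
          push_cast; ring]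
        rw [zpow_sub₀ hτ0]
        simp only [zpow_add₀ hτ0, zpow_natCast]
        rw [pow_succ, show (2 * n) = n * 2 from Nat.mul_comm 2 n, pow_mul]
      rw [hz]
      field_simp
  -- ### Evaluate the triple sum
  set C : ℂ := w ^ (n - 2) / w ^ (2 * n) * twoPiI with hC
  have hsum : (∑ j ∈ range n, ∑ k ∈ range n, ∑ l ∈ range n,
      (if ((j : ℤ) + k + l - 2 * n = -1) then
        (w ^ (n - 1 - j) * w ^ (n - 1 - k) * w ^ (n - 1 - l) / w ^ (2 * n)) * twoPiI
      else 0)) = (∑ j ∈ range n, (j : ℂ)) * C := by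
    rw [Finset.sum_mul]
    refine Finset.sum_congr rfl fun j hj => ?_
    simp only [mem_range] at hj
    -- inner double sum equals j * C
    have hkl : ∀ k ∈ range n, (∑ l ∈ range n,
        (if ((j : ℤ) + k + l - 2 * n = -1) then
          (w ^ (n - 1 - j) * w ^ (n - 1 - k) * w ^ (n - 1 - l) / w ^ (2 * n)) * twoPiI
        else 0)) = if n - j ≤ k then C else 0 := by
      intro k hk
      simp only [mem_range] at hk
      by_cases hcase : n - j ≤ k
      · rw [if_pos hcase]
        rw [Finset.sum_eq_single (2 * n - 1 - j - k)]
        · rw [if_pos (by push_cast; omega)]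
          have he : (n - 1 - j) + (n - 1 - k) + (n - 1 - (2 * n - 1 - j - k)) = n - 2 := by
            omega
          rw [hC, ← pow_add, ← pow_add, he]
        · intro b hb hbne
          rw [if_neg]
          simp only [mem_range] at hb
          push_cast
          omega
        · intro hmem
          exact absurd (Finset.mem_range.mpr (by omega)) hmem
      · rw [if_neg hcase]
        refine Finset.sum_eq_zero fun l hl => ?_
        simp only [mem_range] at hl
        rw [if_neg]
        push_cast
        omega
    rw [Finset.sum_congr rfl hkl]
    rw [Finset.sum_ite, Finset.sum_const, Finset.sum_const_zero, add_zero]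
    have hfil : (range n).filter (fun k => n - j ≤ k) = Finset.Ico (n - j) n := by
      ext x
      simp only [Finset.mem_filter, Finset.mem_range, Finset.mem_Ico]
      omega
    rw [hfil, Nat.card_Ico, show n - (n - j) = j by omega, nsmul_eq_mul]
  -- ### final assembly
  rw [hI1, hI2, hsum, mul_zero, add_zero]
  have hG : (∑ j ∈ range n, (j : ℂ)) * 2 = (n : ℂ) * ((n : ℂ) - 1) := by
    have h := Finset.sum_range_id_mul_two n
    have : ((∑ j ∈ range n, j : ℕ) : ℂ) * 2 = ((n * (n - 1) : ℕ) : ℂ) := by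
      exact_mod_cast congrArg (fun x : ℕ => (x : ℂ)) h
    rw [Nat.cast_sum] at this
    rwa [Nat.cast_mul, Nat.cast_sub hn, Nat.cast_one] at this
  have hcast1 : ((n : ℂ) + 1) - 1 = (n : ℂ) := by ring
  have hcast2 : ((n : ℂ) + 1) - 2 = (n : ℂ) - 1 := by ring
  push_cast
  rw [hcast1, hcast2, hC]
  rcases eq_or_lt_of_le hn with h1 | h2
  · -- n = 1
    simp [← h1]
  · -- n ≥ 2
    have hpow : w ^ (2 * n) = w ^ (n - 2) * w ^ (n + 1 + 1) := by
      rw [← pow_add]; congr 1; omega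
    rw [hpow]
    have hT := twoPiI_ne
    have hp1 : w ^ (n - 2) ≠ 0 := pow_ne_zero _ hw0
    have hp2 : w ^ (n + 1 + 1) ≠ 0 := pow_ne_zero _ hw0
    field_simp
    linear_combination hG
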